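/- arXiv:2010.03512 — 7 statements merged into one kernel-verified Lean document; each statement's English description precedes it below -/
import Mathlib

section
/- Let r ≥ 1 and θ = e^{2πi/r}. Then (1/2) Σ over pairs of distinct m₁, m₂ ∈ {0,...,r-1} of θ^{m₁+m₂}/(θ^{m₂} − θ^{m₁})² equals −r(r²−1)/24. -/
/-!
Writing `θ ^ m₂ = θ ^ m₁ * θ ^ k`, every inner sum equals `S = ∑_{0<k<r} θ^k / (θ^k - 1)^2`,
so the double sum is `r * S`. For `x ^ r = 1`, `x ≠ 1`, the moment sums of the geometric series
give `2 r x / (x - 1)^2 = ∑_{j<r} (r j - j^2) x^j`; summed over all `r`-th roots of unity this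
polynomial contributes only `r` times its constant term, which is `0`. Hence `2 r S` is minus its
value at `x = 1`, i.e. `-∑_{j<r} (r j - j^2) = -r (r^2 - 1) / 6`, and `S = -(r^2 - 1) / 12`.
-/

open Finset

theorem Function.Periodic.sum_range_comp_add_left {M : Type*} [AddCommMonoid M] {f : ℕ → M}
    {n : ℕ} (hf : Function.Periodic f n) (m : ℕ) :
    ∑ k ∈ range n, f (m + k) = ∑ k ∈ range n, f k := by
  induction m with
  | zero => simp
  | succ m ih =>
    rcases n with _ | n
    · simp
    rw [← ih, sum_range_succ, sum_range_succ' (fun k => f (m + k))]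
    congr 1
    · exact sum_congr rfl fun k _ => congrArg f (by omega)
    · exact (congrArg f (by omega)).trans (hf m)

section MomentSums

variable {R : Type*} [CommRing R]

theorem sub_one_mul_sum_range_nat_mul_pow (x : R) (n : ℕ) :
    (x - 1) * ∑ j ∈ range n, (j : R) * x ^ j
      = ((n : R) - 1) * x ^ n - ∑ j ∈ range n, x ^ j + 1 := by
  induction n with
  | zero => simp
  | succ n ih =>
    rw [sum_range_succ, sum_range_succ]
    push_cast
    linear_combination ih

theorem sub_one_mul_sum_range_nat_sq_mul_pow (x : R) (n : ℕ) :
    (x - 1) * ∑ j ∈ range n, (j : R) ^ 2 * x ^ j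
      = ((n : R) - 1) ^ 2 * x ^ n - 2 * ∑ j ∈ range n, (j : R) * x ^ j
        + ∑ j ∈ range n, x ^ j - 1 := by
  induction n with
  | zero => simp
  | succ n ih =>
    rw [sum_range_succ, sum_range_succ, sum_range_succ]
    push_cast
    linear_combination ih

theorem six_mul_sum_range_mul_sub_sq (c : R) (n : ℕ) :
    6 * ∑ j ∈ range n, (c * j - (j : R) ^ 2) = n * (n - 1) * (3 * c - 2 * n + 1) := by
  induction n with
  | zero => simp
  | succ n ih =>
    rw [sum_range_succ]
    push_cast
    linear_combination ih

end MomentSums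

theorem two_mul_mul_div_sub_one_sq_of_pow_eq_one {K : Type*} [Field K] {x : K} {n : ℕ}
    (hxn : x ^ n = 1) (hx : x ≠ 1) :
    2 * n * (x / (x - 1) ^ 2) = ∑ j ∈ range n, (n * j - (j : K) ^ 2) * x ^ j := by
  have hgeom : ∑ j ∈ range n, x ^ j = 0 := by rw [geom_sum_eq hx, hxn, sub_self, zero_div]
  have h₁ := sub_one_mul_sum_range_nat_mul_pow x n
  have h₂ := sub_one_mul_sum_range_nat_sq_mul_pow x n
  rw [hgeom, hxn] at h₁ h₂
  have hx₁ : x - 1 ≠ 0 := sub_ne_zero.mpr hx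
  simp only [sub_mul, mul_assoc, sum_sub_distrib, ← mul_sum]
  field_simp
  linear_combination (-((n : K) * (x - 1)) - 2) * h₁ + (x - 1) * h₂

namespace IsPrimitiveRoot

variable {K : Type*} [Field K] {ζ : K} {n : ℕ}

theorem sum_range_sum_range_mul_pow_pow (hζ : IsPrimitiveRoot ζ n) (c : ℕ → K) :
    ∑ k ∈ range n, ∑ j ∈ range n, c j * (ζ ^ k) ^ j = n * c 0 := by
  have horth : ∀ j ∈ range n,
      ∑ k ∈ range n, c j * (ζ ^ k) ^ j = if j = 0 then n * c 0 else 0 := by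
    intro j hj
    split_ifs with hj₀
    · simp [hj₀, mul_comm]
    · have hζj : ζ ^ j ≠ 1 := hζ.pow_ne_one_of_pos_of_lt hj₀ (mem_range.mp hj)
      have hζjn : (ζ ^ j) ^ n = 1 := by rw [pow_right_comm, hζ.pow_eq_one, one_pow]
      simp_rw [← mul_sum, pow_right_comm ζ _ j, geom_sum_eq hζj, hζjn, sub_self, zero_div,
        mul_zero]
  rw [sum_comm, sum_congr rfl horth, sum_ite_eq']
  rcases n with _ | n <;> simp

/-- The `k = 0` term is `1 / 0 = 0`. -/
theorem sum_range_pow_div_pow_sub_one_sq [CharZero K] (hζ : IsPrimitiveRoot ζ n) (hn : n ≠ 0) :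
    ∑ k ∈ range n, ζ ^ k / (ζ ^ k - 1) ^ 2 = -((n : K) ^ 2 - 1) / 12 := by
  set P : K → K := fun x => ∑ j ∈ range n, (n * j - (j : K) ^ 2) * x ^ j with hP
  have hterm : ∀ k ∈ range n,
      2 * n * (ζ ^ k / (ζ ^ k - 1) ^ 2) = P (ζ ^ k) - if k = 0 then P 1 else 0 := by
    intro k hk
    rcases eq_or_ne k 0 with rfl | hk₀
    · simp
    rw [if_neg hk₀, sub_zero]
    exact two_mul_mul_div_sub_one_sq_of_pow_eq_one
      (by rw [pow_right_comm, hζ.pow_eq_one, one_pow])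
      (hζ.pow_ne_one_of_pos_of_lt hk₀ (mem_range.mp hk))
  have hsum : 2 * n * ∑ k ∈ range n, ζ ^ k / (ζ ^ k - 1) ^ 2 = -P 1 := by
    rw [mul_sum, sum_congr rfl hterm, sum_sub_distrib, sum_ite_eq',
      if_pos (mem_range.mpr (Nat.pos_of_ne_zero hn)),
      hζ.sum_range_sum_range_mul_pow_pow fun j => n * j - (j : K) ^ 2]
    simp
  have hP₁ : 6 * P 1 = n * (n - 1) * (n + 1) := by
    simp only [hP, one_pow, mul_one]
    linear_combination six_mul_sum_range_mul_sub_sq (n : K) n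
  have hn' : (n : K) ≠ 0 := Nat.cast_ne_zero.mpr hn
  apply mul_left_cancel₀ (mul_ne_zero two_ne_zero hn')
  linear_combination hsum - hP₁ / 6

end IsPrimitiveRoot

theorem sum_range_sum_range_pow_add_div_pow_sub_pow_sq {K : Type*} [Field K] {ζ : K} {n : ℕ}
    (hζ : ζ ^ n = 1) :
    ∑ m₁ ∈ range n, ∑ m₂ ∈ range n, ζ ^ (m₁ + m₂) / (ζ ^ m₂ - ζ ^ m₁) ^ 2
      = n * ∑ k ∈ range n, ζ ^ k / (ζ ^ k - 1) ^ 2 := by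
  suffices hinner : ∀ m₁ ∈ range n, ∑ m₂ ∈ range n, ζ ^ (m₁ + m₂) / (ζ ^ m₂ - ζ ^ m₁) ^ 2
      = ∑ k ∈ range n, ζ ^ k / (ζ ^ k - 1) ^ 2 by
    rw [sum_congr rfl hinner, sum_const, card_range, nsmul_eq_mul]
  intro m₁ hm₁
  have hζ₀ : ζ ^ m₁ ≠ 0 :=
    pow_ne_zero _ (ne_zero_pow (Nat.ne_zero_of_lt (mem_range.mp hm₁)) (hζ ▸ one_ne_zero))
  have hperiodic : Function.Periodic (fun m => ζ ^ (m₁ + m) / (ζ ^ m - ζ ^ m₁) ^ 2) n := by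
    intro m
    simp only [← add_assoc, pow_add ζ _ n, hζ, mul_one]
  rw [← hperiodic.sum_range_comp_add_left m₁]
  refine sum_congr rfl fun k _ => ?_
  rw [show ζ ^ (m₁ + (m₁ + k)) = (ζ ^ m₁) ^ 2 * ζ ^ k by ring,
    show ζ ^ (m₁ + k) - ζ ^ m₁ = ζ ^ m₁ * (ζ ^ k - 1) by ring, mul_pow,
    mul_div_mul_left _ _ (pow_ne_zero 2 hζ₀)]

/-- `Ψ⁽¹⁾_r(∅) = -r(r²-1)/24`. -/
theorem psi1_eval (r : ℕ) (hr : 1 ≤ r) (θ : ℂ)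
    (hθ : θ = Complex.exp (2 * Real.pi * Complex.I / r)) :
    (1 / 2 : ℂ) *
        ∑ m₁ ∈ Finset.range r, ∑ m₂ ∈ Finset.range r,
          (if m₁ ≠ m₂ then θ ^ (m₁ + m₂) / (θ ^ m₂ - θ ^ m₁) ^ 2 else 0) =
      -(r : ℂ) * ((r : ℂ) ^ 2 - 1) / 24 := by
  have hθr : IsPrimitiveRoot θ r := hθ ▸ Complex.isPrimitiveRoot_exp r (by omega)
  -- the diagonal terms vanish anyway, being divisions by zero
  have hdiag (m₁ m₂ : ℕ) :
      (if m₁ ≠ m₂ then θ ^ (m₁ + m₂) / (θ ^ m₂ - θ ^ m₁) ^ 2 else 0)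
        = θ ^ (m₁ + m₂) / (θ ^ m₂ - θ ^ m₁) ^ 2 := by
    rcases eq_or_ne m₁ m₂ with rfl | h
    · simp
    · rw [if_pos h]
  simp_rw [hdiag, sum_range_sum_range_pow_add_div_pow_sub_pow_sq hθr.pow_eq_one,
    hθr.sum_range_pow_div_pow_sub_one_sq (by omega)]
  ring
end

section
/- Let r ≥ 2, θ a primitive r-th root of unity, and a an integer not divisible by r. Then θ^a/(1 − θ^a)² = Σ_{m=0}^{r−1} (m(r−m)/(2r)) θ^{am}. -/
/-!
Put `x = θ ^ a`, so `x ^ r = 1` and `x ≠ 1`, whence `∑_{m<r} x ^ m = 0`. Multiplying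
`∑ f(m) x ^ m` by `1 - x` and summing by parts turns the weight `f` into its difference
`f(m+1) - f(m)`. For `f(m) = m (r - m)` the boundary terms vanish and the difference is
`r - 1 - 2m`; a second application, to `f(m) = m`, gives `(1 - x) ∑ m x ^ m = -r`.
Altogether `(1 - x)² ∑ m (r - m) x ^ m = 2 r x`.
-/

open Finset

theorem one_sub_mul_sum_range_mul_pow {R : Type*} [CommRing R] (f : ℕ → R) (x : R) (n : ℕ) :
    (1 - x) * ∑ m ∈ range n, f m * x ^ m =
      f 0 - f n * x ^ n + ∑ m ∈ range n, (f (m + 1) - f m) * x ^ (m + 1) := by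
  induction n with
  | zero => simp
  | succ n ih =>
    rw [sum_range_succ, sum_range_succ, mul_add, ih]
    ring

section RootOfUnity

variable {K : Type*} [Field K] {x : K} {n : ℕ}

theorem sum_range_pow_eq_zero_of_pow_eq_one (hxn : x ^ n = 1) (hx : x ≠ 1) :
    ∑ m ∈ range n, x ^ m = 0 := by
  rw [geom_sum_eq hx, hxn, sub_self, zero_div]

theorem one_sub_mul_sum_range_natCast_mul_pow (hxn : x ^ n = 1) (hx : x ≠ 1) :
    (1 - x) * ∑ m ∈ range n, (m : K) * x ^ m = -n := by
  have hgeom := sum_range_pow_eq_zero_of_pow_eq_one hxn hx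
  rw [one_sub_mul_sum_range_mul_pow (fun m : ℕ ↦ (m : K)), hxn]
  simp only [Nat.cast_add, Nat.cast_one, add_sub_cancel_left, one_mul, pow_succ, ← sum_mul,
    hgeom, Nat.cast_zero]
  ring

theorem one_sub_sq_mul_sum_range_mul_sub_mul_pow (hxn : x ^ n = 1) (hx : x ≠ 1) :
    (1 - x) ^ 2 * ∑ m ∈ range n, (m : K) * (n - m) * x ^ m = 2 * n * x := by
  have hgeom := sum_range_pow_eq_zero_of_pow_eq_one hxn hx
  have hlin := one_sub_mul_sum_range_natCast_mul_pow hxn hx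
  have hdiff : ∑ m ∈ range n, ((↑(m + 1) : K) * (n - ↑(m + 1)) - m * (n - m)) * x ^ (m + 1) =
      x * ((n - 1) * ∑ m ∈ range n, x ^ m - 2 * ∑ m ∈ range n, (m : K) * x ^ m) := by
    rw [mul_sub, mul_sum, mul_sum, mul_sum, mul_sum, ← sum_sub_distrib]
    refine sum_congr rfl fun m _ ↦ ?_
    push_cast
    ring
  rw [sq, mul_assoc, one_sub_mul_sum_range_mul_pow (fun m : ℕ ↦ (m : K) * (n - m)), hdiff,
    hgeom]
  linear_combination (-2 * x) * hlin

end RootOfUnity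

/-- for a primitive `r`-th root of unity `θ` and `r ∤ a`,
`θ^a/(1-θ^a)² = ∑_{m=0}^{r-1} (m(r-m)/(2r)) θ^{am}`. -/
theorem root_of_unity_identity (r : ℕ) (hr : 2 ≤ r) (θ : ℂ)
    (hθ : IsPrimitiveRoot θ r) (a : ℤ) (ha : ¬ (r : ℤ) ∣ a) :
    θ ^ a / (1 - θ ^ a) ^ 2 =
      ∑ m ∈ Finset.range r, ((m : ℂ) * ((r : ℂ) - m) / (2 * r)) * θ ^ (a * (m : ℤ)) := by
  set x := θ ^ a
  have hxr : x ^ r = 1 := by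
    rw [← zpow_natCast, ← zpow_mul, mul_comm, zpow_mul, zpow_natCast, hθ.pow_eq_one, one_zpow]
  have hx : x ≠ 1 := fun h ↦ ha ((hθ.zpow_eq_one_iff_dvd a).mp h)
  have hx' : (1 - x) ^ 2 ≠ 0 := pow_ne_zero 2 (sub_ne_zero.mpr hx.symm)
  have hr' : (2 * r : ℂ) ≠ 0 := by norm_cast; omega
  have hpow : ∀ m : ℕ, θ ^ (a * (m : ℤ)) = x ^ m := fun m ↦ by rw [zpow_mul, zpow_natCast]
  simp only [hpow, div_mul_eq_mul_div, ← sum_div]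
  rw [div_eq_div_iff hx' hr']
  linear_combination -(one_sub_sq_mul_sum_range_mul_sub_mul_pow hxr hx)
end

section
/- Let r ≥ 2 and s ∈ {1,...,r+1} with r ≡ 1 (mod s), writing r = r′s + 1. For m ∈ {1,...,r−1} write m = m′s + m″ with m″ ∈ {1,...,s}, and set ℓ(m) = r′m″ − m′. Then Σ_{m=1}^{r−1} m(r−m)(r − 1 − 2ℓ(m)) = −r(r²−1)/6. -/
/-!
The reflection `m ↦ r - m` of `{1, …, r - 1}` exchanges `(m', m'')` with `(r' - 1 - m', s + 1 - m'')`,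
so `ℓ(m) + ℓ(r - m) = r` and the summands at `m` and `r - m` add up to `-2 m (r - m)`.
Hence the sum is `-∑ m (r - m) = -r (r² - 1) / 6`.
-/

open Finset

theorem Nat.mod_add_mod_add_one_of_add_add_one_eq_mul {a b s N : ℕ} (hs : 0 < s)
    (h : a + b + 1 = N * s) : a % s + b % s + 1 = s := by
  have hdvd : s ∣ a % s + b % s + 1 := by
    have := Nat.div_add_mod a s
    have := Nat.div_add_mod b s
    refine (Nat.dvd_add_right (dvd_mul_right s (a / s + b / s))).mp ?_
    rw [show s * (a / s + b / s) + (a % s + b % s + 1) = N * s by linarith]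
    exact dvd_mul_left s N
  have := Nat.mod_lt a hs
  have := Nat.mod_lt b hs
  exact Nat.eq_of_dvd_of_lt_two_mul (by omega) hdvd (by omega)

theorem Nat.div_add_div_add_one_of_add_add_one_eq_mul {a b s N : ℕ} (hs : 0 < s)
    (h : a + b + 1 = N * s) : a / s + b / s + 1 = N := by
  have hmod := Nat.mod_add_mod_add_one_of_add_add_one_eq_mul hs h
  have := Nat.div_add_mod a s
  have := Nat.div_add_mod b s
  refine Nat.eq_of_mul_eq_mul_left hs ?_
  linarith

theorem sum_Icc_one_sub_reflect {M : Type*} [AddCommMonoid M] (f : ℕ → M) (n : ℕ) :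
    ∑ m ∈ Icc 1 (n - 1), f (n - m) = ∑ m ∈ Icc 1 (n - 1), f m := by
  rcases n with _ | n
  · simp
  rw [Nat.add_sub_cancel, ← Ico_add_one_right_eq_Icc, sum_Ico_reflect _ _ (Nat.le_succ _)]
  simp

theorem sum_Icc_mul_sub (c : ℚ) (n : ℕ) :
    ∑ m ∈ Icc 1 n, (m : ℚ) * (c - m) = c * n * (n + 1) / 2 - n * (n + 1) * (2 * n + 1) / 6 := by
  induction n with
  | zero => simp
  | succ k ih =>
    rw [sum_Icc_succ_top (by omega), ih]
    push_cast
    ring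

theorem sum_Icc_mul_sub_self (r : ℕ) :
    ∑ m ∈ Icc 1 (r - 1), (m : ℚ) * (r - m) = r * (r ^ 2 - 1) / 6 := by
  rcases r with _ | r
  · simp
  rw [Nat.add_sub_cancel, sum_Icc_mul_sub]
  push_cast
  ring

/-- The paper's `ℓ(m) = r' m'' - m'`, where `m - 1 = m' s + (m'' - 1)` with `0 ≤ m'' - 1 < s`. -/
def ell (r' s m : ℕ) : ℚ := r' * (((m - 1) % s : ℕ) + 1) - ((m - 1) / s : ℕ)

theorem ell_add_ell_sub {r s r' m : ℕ} (hs : 0 < s) (hrs : r = r' * s + 1) (hm1 : 1 ≤ m)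
    (hm2 : m ≤ r - 1) : ell r' s m + ell r' s (r - m) = r := by
  have hsplit : (m - 1) + (r - m - 1) + 1 = r' * s := by omega
  have hmod : (((m - 1) % s : ℕ) : ℚ) + ((r - m - 1) % s : ℕ) + 1 = s := by
    exact_mod_cast Nat.mod_add_mod_add_one_of_add_add_one_eq_mul hs hsplit
  have hdiv : (((m - 1) / s : ℕ) : ℚ) + ((r - m - 1) / s : ℕ) + 1 = r' := by
    exact_mod_cast Nat.div_add_div_add_one_of_add_add_one_eq_mul hs hsplit
  have hr : (r : ℚ) = r' * s + 1 := by exact_mod_cast hrs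
  unfold ell
  linear_combination r' * hmod - hdiv - hr

theorem cubic_sum_case_plus_general (r s r' : ℕ) (hs1 : 1 ≤ s)
    (hrs : r = r' * s + 1) :
    ∑ m ∈ Finset.Icc 1 (r - 1),
        (m : ℚ) * ((r : ℚ) - m) *
          ((r : ℚ) - 1 - 2 * ((r' : ℚ) * ((((m - 1) % s : ℕ) : ℚ) + 1)
            - (((m - 1) / s : ℕ) : ℚ))) =
      -(r : ℚ) * ((r : ℚ) ^ 2 - 1) / 6 := by
  set f : ℕ → ℚ := fun m => m * (r - m) * (r - 1 - 2 * ell r' s m)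
  change ∑ m ∈ Icc 1 (r - 1), f m = _
  have hpair : ∀ m ∈ Icc 1 (r - 1), f m + f (r - m) = -2 * ((m : ℚ) * (r - m)) := by
    intro m hm
    obtain ⟨hm1, hm2⟩ := mem_Icc.mp hm
    have hell := ell_add_ell_sub hs1 hrs hm1 hm2
    simp only [f, Nat.cast_sub (show m ≤ r by omega), sub_sub_cancel]
    linear_combination -2 * (m : ℚ) * (r - m) * hell
  have hdouble : 2 * ∑ m ∈ Icc 1 (r - 1), f m = -2 * ∑ m ∈ Icc 1 (r - 1), (m : ℚ) * (r - m) := by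
    rw [two_mul]
    nth_rewrite 2 [← sum_Icc_one_sub_reflect]
    rw [← sum_add_distrib, sum_congr rfl hpair, mul_sum]
  rw [sum_Icc_mul_sub_self] at hdouble
  linear_combination hdouble / 2

/-- for `r = r's + 1`, writing `m = m's + m''` with `m'' ∈ {1,…,s}` and
`ℓ(m) = r'm'' - m'`, one has `∑_{m=1}^{r-1} m(r-m)(r-1-2ℓ(m)) = -r(r²-1)/6`. -/
theorem cubic_sum_case_plus (r s r' : ℕ) (hr : 2 ≤ r) (hs1 : 1 ≤ s) (hs2 : s ≤ r + 1)
    (hrs : r = r' * s + 1) :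
    ∑ m ∈ Finset.Icc 1 (r - 1),
        (m : ℚ) * ((r : ℚ) - m) *
          ((r : ℚ) - 1 - 2 * ((r' : ℚ) * ((((m - 1) % s : ℕ) : ℚ) + 1)
            - (((m - 1) / s : ℕ) : ℚ))) =
      -(r : ℚ) * ((r : ℚ) ^ 2 - 1) / 6 :=
  cubic_sum_case_plus_general r s r' hs1 hrs
end

section
/- Let r > 1 and s ∈ {1,...,r+1} be coprime. There exists a descending partition λ = (λ₁,...,λ_ℓ) of r such that λ(i) := min{m : λ₁+...+λ_m ≥ i} equals 1 + ⌊s(i−1)/r⌋ for all i ∈ {1,...,r} if and only if r ≡ ±1 (mod s). In that case, writing r = r′s + r″ with r″ ∈ {1, s−1}, the partition is λ₁ = ... = λ_{r″} = r′+1 and λ_{r″+1} = ... = λ_ℓ = r′, with ℓ = s − [s = r+1]. -/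
/-!
The counting function `λ(i)` of a partition with prefix sums `S_m = λ₁ + ⋯ + λ_m` satisfies
`λ(i) ≤ m ↔ i ≤ S_m`, so `λ(i) = 1 + ⌊s(i-1)/r⌋` for all `i` says exactly that `S_m = ⌈mr/s⌉`
for `m ≤ s`. Writing `r = qs + t`, this is `S_m = mq + ⌈mt/s⌉`. A descending partition has
`S_m / m` antitone, and `m ↦ ⌈mt/s⌉ / m` is antitone on `[1, s]` only for `t ∈ {0, 1, s - 1}`;
`t = 0` is excluded by coprimality unless `s = 1`. Conversely, for `t ∈ {1, s - 1}` we have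
`⌈mt/s⌉ = min m t`, which are the prefix sums of `((q+1)^t, q^(s-t))`.
-/

open Finset

/-- The counting function of a partition (given as a list of parts):
`partCount L i = min {m | λ₁ + ⋯ + λ_m ≥ i}`. -/
noncomputable def partCount (L : List ℕ) (i : ℕ) : ℕ := sInf {m | i ≤ (L.take m).sum}

namespace Nat

theorem ceilDiv_eq_iff {a b c : ℕ} (ha : 0 < a) : b ⌈/⌉ a = c ↔ b ≤ a * c ∧ a * c < b + a := by
  rw [ceilDiv_eq_add_pred_div, Nat.div_eq_iff ha, mul_comm c a]
  omega

theorem le_ceilDiv_iff_mul_sub_one_lt {a b c : ℕ} (ha : 0 < a) (hc : 1 ≤ c) :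
    c ≤ b ⌈/⌉ a ↔ a * (c - 1) < b := by
  rw [← not_le (a := b), ← ceilDiv_le_iff_le_mul ha]
  omega

theorem mul_add_ceilDiv {a : ℕ} (ha : 0 < a) (q b : ℕ) : (a * q + b) ⌈/⌉ a = q + b ⌈/⌉ a := by
  rw [ceilDiv_eq_add_pred_div, ceilDiv_eq_add_pred_div, add_assoc, Nat.add_sub_assoc (by omega),
    Nat.mul_add_div ha]

theorem mul_ceilDiv_eq_min {a m s : ℕ} (hm : m ≤ s) (ha : a = 1 ∨ a = s - 1) :
    m * a ⌈/⌉ s = min m a := by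
  rcases Nat.eq_zero_or_pos s with rfl | hs
  · simp [Nat.le_zero.1 hm]
  rw [ceilDiv_eq_iff hs]
  rcases ha with rfl | rfl
  · rcases Nat.eq_zero_or_pos m with rfl | hm0
    · simp [hs]
    · rw [Nat.min_eq_right hm0]
      omega
  · obtain ⟨u, rfl⟩ : ∃ u, s = u + 1 := ⟨s - 1, by omega⟩
    rw [Nat.add_sub_cancel]
    rcases Nat.lt_or_ge m (u + 1) with h | h
    · rw [Nat.min_eq_left (by omega)]
      constructor <;> nlinarith
    · obtain rfl : m = u + 1 := by omega
      rw [Nat.min_eq_right (by omega)]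
      constructor <;> nlinarith

/-- The witness is `m = s - ⌈s/t⌉`, where `⌈mt/s⌉ = t - 1 < m` and `⌈(m+1)t/s⌉ = t`. -/
theorem exists_mul_ceilDiv_lt_mul_ceilDiv_succ {s t : ℕ} (ht : 2 ≤ t) (hts : t + 2 ≤ s) :
    ∃ m < s, (m + 1) * (m * t ⌈/⌉ s) < m * ((m + 1) * t ⌈/⌉ s) := by
  obtain ⟨k, hk⟩ : ∃ k, s ⌈/⌉ t = k := ⟨_, rfl⟩
  obtain ⟨hk1, hk2⟩ := (ceilDiv_eq_iff (by omega)).1 hk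
  have hk0 : 1 ≤ k := Nat.pos_of_ne_zero fun h => by simp [h] at hk1; omega
  have hk3 : t + k ≤ s := by
    rcases lt_or_ge k 3 with h | h
    · interval_cases k <;> nlinarith
    · nlinarith
  obtain ⟨m, rfl⟩ : ∃ m, s = m + k := ⟨s - k, by omega⟩
  obtain ⟨u, rfl⟩ : ∃ u, t = u + 1 := ⟨t - 1, by omega⟩
  refine ⟨m, by omega, ?_⟩
  have h1 : m * (u + 1) ⌈/⌉ (m + k) = u := by
    rw [ceilDiv_eq_iff (by omega)]
    constructor <;> nlinarith
  have h2 : (m + 1) * (u + 1) ⌈/⌉ (m + k) = u + 1 := by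
    rw [ceilDiv_eq_iff (by omega)]
    constructor <;> nlinarith
  rw [h1, h2]
  nlinarith

theorem eq_of_forall_le_iff_of_le {a b n : ℕ} (ha : a ≤ n) (hb : b ≤ n)
    (h : ∀ i, 1 ≤ i → i ≤ n → (i ≤ a ↔ i ≤ b)) : a = b := by
  by_contra hab
  rcases Nat.lt_or_gt_of_ne hab with hlt | hlt
  · exact absurd ((h b (by omega) hb).2 le_rfl) (by omega)
  · exact absurd ((h a (by omega) ha).1 le_rfl) (by omega)

end Nat

namespace List

theorem sum_take_replicate_append_replicate (a b q m : ℕ) :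
    ((replicate a (q + 1) ++ replicate b q).take m).sum = min m (a + b) * q + min m a := by
  simp only [take_append, take_replicate, sum_append, sum_replicate, length_replicate, smul_eq_mul]
  rw [show min m (a + b) = min m a + min (m - a) b by omega]
  ring

theorem mul_sum_take_succ_le_of_pairwise_ge {L : List ℕ} (hL : L.Pairwise (· ≥ ·)) (m : ℕ) :
    m * (L.take (m + 1)).sum ≤ (m + 1) * (L.take m).sum := by
  rcases lt_or_ge m L.length with hm | hm
  · have hle : m * L[m] ≤ (L.take m).sum := by
      have := (L.take m).card_nsmul_le_sum L[m] fun x hx => by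
        obtain ⟨j, hj, rfl⟩ := mem_iff_getElem.1 hx
        rw [length_take] at hj
        simpa using pairwise_iff_getElem.1 hL j m (by omega) hm (by omega)
      simpa [Nat.min_eq_left hm.le] using this
    rw [sum_take_succ _ _ hm]
    nlinarith
  · rw [take_of_length_le hm, take_of_length_le (by omega)]
    exact Nat.mul_le_mul_right _ (Nat.le_succ m)

end List

theorem partCount_le_iff {L : List ℕ} {i m : ℕ} (hi : i ≤ L.sum) :
    partCount L i ≤ m ↔ i ≤ (L.take m).sum := by
  have hne : {m | i ≤ (L.take m).sum}.Nonempty := ⟨L.length, by simpa using hi⟩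
  exact ⟨fun h => (Nat.sInf_mem hne).trans (L.monotone_sum_take h), fun h => Nat.sInf_le h⟩

theorem partCount_eq_iff_sum_take_eq_ceilDiv {L : List ℕ} {r s : ℕ} (hr : 0 < r) (hs : 0 < s)
    (hsum : L.sum = r) :
    (∀ i ∈ Icc 1 r, partCount L i = 1 + s * (i - 1) / r) ↔
      ∀ m ≤ s, (L.take m).sum = m * r ⌈/⌉ s := by
  constructor
  · intro hL m hm
    have hSm : (L.take m).sum ≤ r := hsum ▸ (L.take_sublist m).sum_le_sum fun _ _ => Nat.zero_le _
    have hceil : m * r ⌈/⌉ s ≤ r := (ceilDiv_le_iff_le_mul hs).2 (Nat.mul_le_mul_right r hm)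
    refine Nat.eq_of_forall_le_iff_of_le hSm hceil fun i hi1 hir => ?_
    rw [← partCount_le_iff (hsum ▸ hir), hL i (mem_Icc.2 ⟨hi1, hir⟩),
      Nat.le_ceilDiv_iff_mul_sub_one_lt hs hi1, Nat.add_comm, ← Nat.lt_iff_add_one_le,
      Nat.div_lt_iff_lt_mul hr]
  · intro hL i hi
    obtain ⟨hi1, hir⟩ := mem_Icc.1 hi
    have hk : s * (i - 1) / r < s :=
      (Nat.div_lt_iff_lt_mul hr).2 (Nat.mul_lt_mul_of_pos_left (by omega) hs)
    refine le_antisymm ?_ ?_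
    · rw [partCount_le_iff (hsum ▸ hir), hL _ (by omega), Nat.le_ceilDiv_iff_mul_sub_one_lt hs hi1,
        Nat.add_comm]
      exact Nat.mul_comm r _ ▸ Nat.lt_mul_div_succ _ hr
    · rw [Nat.add_comm, Nat.succ_le_iff, ← not_le, partCount_le_iff (hsum ▸ hir), hL _ hk.le,
        Nat.le_ceilDiv_iff_mul_sub_one_lt hs hi1, not_lt]
      exact Nat.div_mul_le_self _ _

theorem dvd_sub_one_or_dvd_add_one_of_sum_take_eq_ceilDiv {L : List ℕ} {r s : ℕ}
    (hcop : r.Coprime s) (hs : 0 < s) (hL : L.Pairwise (· ≥ ·))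
    (htake : ∀ m ≤ s, (L.take m).sum = m * r ⌈/⌉ s) : s ∣ r - 1 ∨ s ∣ r + 1 := by
  have hrqt : r = s * (r / s) + r % s := (Nat.div_add_mod r s).symm
  have hts : r % s < s := Nat.mod_lt r hs
  by_cases ht0 : r % s = 0
  · rw [hcop.symm.eq_one_of_dvd (Nat.dvd_of_mod_eq_zero ht0)]
    exact Or.inl (one_dvd _)
  by_cases ht1 : r % s = 1
  · exact Or.inl ⟨r / s, by omega⟩
  by_cases hts1 : r % s + 1 = s
  · exact Or.inr ⟨r / s + 1, by rw [Nat.mul_add_one]; omega⟩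
  exfalso
  obtain ⟨m, hm, hlt⟩ :=
    Nat.exists_mul_ceilDiv_lt_mul_ceilDiv_succ (s := s) (t := r % s) (by omega) (by omega)
  have hS : ∀ n ≤ s, (L.take n).sum = n * (r / s) + n * (r % s) ⌈/⌉ s := fun n hn => by
    rw [htake n hn, hrqt, Nat.mul_add, Nat.mul_left_comm, Nat.mul_add_ceilDiv hs, ← hrqt]
  have hstar := L.mul_sum_take_succ_le_of_pairwise_ge hL m
  rw [hS m hm.le, hS (m + 1) hm] at hstar
  nlinarith

theorem replicate_append_replicate_spec {r s q a : ℕ} (hr : 1 < r) (hs : 0 < s)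
    (hrs : r = q * s + a) (ha : a = 1 ∨ a = s - 1) (L : List ℕ)
    (hL : L = List.replicate a (q + 1) ++
      List.replicate ((s - (if s = r + 1 then 1 else 0)) - a) q) :
    L.Pairwise (· ≥ ·) ∧ (∀ x ∈ L, 0 < x) ∧ L.sum = r ∧
      ∀ m ≤ s, (L.take m).sum = m * r ⌈/⌉ s := by
  set ℓ := s - (if s = r + 1 then 1 else 0) with hℓ
  have hcover : q = 0 ∨ ℓ = s := by
    by_cases hse : s = r + 1
    · exact Or.inl (by nlinarith)
    · exact Or.inr (by simp [hℓ, hse])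
  have hqpos : 0 < q ∨ ℓ ≤ a := by
    rcases Nat.eq_zero_or_pos q with rfl | hq
    · rw [zero_mul, zero_add] at hrs
      have hse : s = r + 1 := by omega
      simp only [hℓ, hse, if_true]
      omega
    · exact Or.inl hq
  have htake : ∀ m ≤ s, (L.take m).sum = m * r ⌈/⌉ s := by
    intro m hm
    rw [hL, List.sum_take_replicate_append_replicate, hrs,
      show m * (q * s + a) = s * (m * q) + m * a by ring, Nat.mul_add_ceilDiv hs,
      Nat.mul_ceilDiv_eq_min hm ha]
    rcases hcover with rfl | h
    · simp
    · rw [Nat.min_eq_left (by omega), Nat.mul_comm]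
  refine ⟨?_, ?_, ?_, htake⟩
  · rw [hL, List.pairwise_append]
    refine ⟨List.pairwise_replicate.2 (Or.inr le_rfl), List.pairwise_replicate.2 (Or.inr le_rfl),
      ?_⟩
    simp only [List.mem_replicate]
    omega
  · intro x hx
    rw [hL, List.mem_append, List.mem_replicate, List.mem_replicate] at hx
    omega
  · have hlen : L.length ≤ s := by
      rw [hL, List.length_append, List.length_replicate, List.length_replicate]
      omega
    rw [← List.take_of_length_le hlen, htake s le_rfl, Nat.ceilDiv_eq_iff hs]
    omega

theorem partition_one_cycle_general (r s : ℕ) (hr : 1 < r)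
    (hcop : Nat.Coprime r s) :
    ((∃ L : List ℕ, L.Pairwise (· ≥ ·) ∧ (∀ x ∈ L, 0 < x) ∧ L.sum = r ∧
          ∀ i ∈ Finset.Icc 1 r, partCount L i = 1 + s * (i - 1) / r) ↔
        (s ∣ r - 1 ∨ s ∣ r + 1)) ∧
      ∀ r' r'' : ℕ, r = r' * s + r'' → (r'' = 1 ∨ r'' = s - 1) →
        ∀ L : List ℕ,
          L = List.replicate r'' (r' + 1) ++
              List.replicate ((s - (if s = r + 1 then 1 else 0)) - r'') r' →
          L.Pairwise (· ≥ ·) ∧ (∀ x ∈ L, 0 < x) ∧ L.sum = r ∧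
            ∀ i ∈ Finset.Icc 1 r, partCount L i = 1 + s * (i - 1) / r := by
  have hs : 0 < s := Nat.pos_of_ne_zero fun h => by simp [h] at hcop; omega
  have hcount (L : List ℕ) (hsum : L.sum = r) :=
    partCount_eq_iff_sum_take_eq_ceilDiv (L := L) (by omega) hs hsum
  have hexplicit := fun r' r'' (hrs : r = r' * s + r'') (ha : r'' = 1 ∨ r'' = s - 1) L hL =>
    let ⟨hsort, hpos, hsum, htake⟩ := replicate_append_replicate_spec hr hs hrs ha L hL
    (⟨hsort, hpos, hsum, (hcount L hsum).2 htake⟩ : _ ∧ _ ∧ _ ∧ _)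
  refine ⟨⟨fun ⟨L, hsort, _, hsum, hL⟩ => ?_, fun hdvd => ?_⟩, hexplicit⟩
  · exact dvd_sub_one_or_dvd_add_one_of_sum_take_eq_ceilDiv hcop hs hsort ((hcount L hsum).1 hL)
  obtain ⟨r', r'', hrs, ha⟩ : ∃ r' r'', r = r' * s + r'' ∧ (r'' = 1 ∨ r'' = s - 1) := by
    rcases hdvd with ⟨c, hc⟩ | ⟨c, hc⟩
    · exact ⟨c, 1, by rw [Nat.mul_comm]; omega, Or.inl rfl⟩
    · obtain ⟨c, rfl⟩ := Nat.exists_eq_succ_of_ne_zero (by rintro rfl; omega : c ≠ 0)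
      exact ⟨c, s - 1, by rw [Nat.mul_add_one] at hc; rw [Nat.mul_comm]; omega, Or.inr rfl⟩
  exact ⟨_, hexplicit r' r'' hrs ha _ rfl⟩

/-- for coprime `r > 1`, `s ∈ {1,…,r+1}`, a descending partition `λ ⊢ r` with
`λ(i) = 1 + ⌊s(i-1)/r⌋` exists iff `r ≡ ±1 (mod s)`, in which case it is given by
`((r'+1)^{r''}, (r')^{ℓ-r''})` with `r = r's + r''`, `r'' ∈ {1, s-1}`, `ℓ = s - [s = r+1]`. -/
theorem partition_one_cycle (r s : ℕ) (hr : 1 < r) (hs1 : 1 ≤ s) (hs2 : s ≤ r + 1)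
    (hcop : Nat.Coprime r s) :
    ((∃ L : List ℕ, L.Pairwise (· ≥ ·) ∧ (∀ x ∈ L, 0 < x) ∧ L.sum = r ∧
          ∀ i ∈ Finset.Icc 1 r, partCount L i = 1 + s * (i - 1) / r) ↔
        (s ∣ r - 1 ∨ s ∣ r + 1)) ∧
      ∀ r' r'' : ℕ, r = r' * s + r'' → (r'' = 1 ∨ r'' = s - 1) →
        ∀ L : List ℕ,
          L = List.replicate r'' (r' + 1) ++
              List.replicate ((s - (if s = r + 1 then 1 else 0)) - r'') r' →
          L.Pairwise (· ≥ ·) ∧ (∀ x ∈ L, 0 < x) ∧ L.sum = r ∧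
            ∀ i ∈ Finset.Icc 1 r, partCount L i = 1 + s * (i - 1) / r :=
  partition_one_cycle_general r s hr hcop
end

section
/- Let d ≥ 2, let (r_μ, s_μ)_{μ=1}^d be pairs of positive integers with r₁/s₁ ≥ ... ≥ r_d/s_d and gcd(r_μ, s_μ) = 1 for all μ. Fix μ ∈ {1,...,d} and i′ ∈ {1,...,r_μ}, and set i = i′ + Σ_{ν<μ} r_ν and k = k′ − Σ_{ν<μ} s_ν with k′ ≥ −⌊s_μ(i′−1)/r_μ⌋ + [i′=1]. Then for any m ≥ 0, defining j = i + m r_μ (assumed ≤ Σ_ν r_ν) and l = k − m s_μ, writing j = j′ + Σ_{ν<λ} r_ν with j′ ∈ {1,...,r_λ} for the appropriate λ, one has l ≥ −⌊s_λ(j′−1)/r_λ⌋ − Σ_{ν<λ} s_ν + [j′=1]. -/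
/-!
Let `S`, `T` be the sums of `r ν`, `s ν` over the blocks `μ ≤ ν < λ` crossed by the shift, so that
`j' + S = i' + m r_μ`. The slope ordering gives `s_μ S ≤ r_μ T` and `s_μ / r_μ ≤ s_λ / r_λ`, whence
`⌊s_μ (i' - 1) / r_μ⌋ + m s_μ ≤ ⌊s_λ (j' - 1) / r_λ⌋ + T`. When `j' = 1` the extra unit comes
either from `i' = 1`, or from coprimality: `r_μ ∤ s_μ (i' - 1)`, so the floor is strictly below
the quotient.
-/

open Finset

theorem Nat.Icc_one_sub_one_eq_Ico (n : ℕ) : Icc 1 (n - 1) = Ico 1 n := by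
  ext; simp only [mem_Icc, mem_Ico]; omega

theorem le_of_add_sum_Ico_le {r : ℕ → ℕ} {μ lam i' j' : ℕ} (hlam : 1 ≤ lam) (hi' : 1 ≤ i')
    (hj' : j' ≤ r lam) (h : i' + ∑ ν ∈ Ico 1 μ, r ν ≤ j' + ∑ ν ∈ Ico 1 lam, r ν) : μ ≤ lam := by
  by_contra! hlt
  have hmono : ∑ ν ∈ Ico 1 (lam + 1), r ν ≤ ∑ ν ∈ Ico 1 μ, r ν :=
    sum_le_sum_of_subset (Ico_subset_Ico_right hlt)
  rw [sum_Ico_succ_top hlam] at hmono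
  omega

theorem Nat.mul_div_le_mul_div_of_mul_le {r s r' s' : ℕ} (hr : 0 < r) (hr' : 0 < r')
    (h : r' * s ≤ r * s') (x : ℕ) : s * x / r ≤ s' * x / r' := by
  rw [← Nat.mul_div_mul_right (s * x) r hr', ← Nat.mul_div_mul_right (s' * x) r' hr, mul_comm r' r]
  exact Nat.div_le_div_right (by nlinarith)

theorem Nat.Coprime.mul_div_lt {r s y : ℕ} (hcop : r.Coprime s) (hy : 0 < y) (hyr : y < r) :
    r * (s * y / r) < s * y :=
  Nat.mul_div_lt_iff_not_dvd.2 fun hdvd =>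
    (Nat.le_of_dvd hy (hcop.dvd_of_dvd_mul_left hdvd)).not_gt hyr

theorem Nat.mul_div_add_mul_le {r s r' s' x y m S T : ℕ} (hr : 0 < r) (hr' : 0 < r')
    (hslope : r' * s ≤ r * s') (hST : s * S ≤ r * T) (hshift : y + m * r = x + S) :
    s * y / r + m * s ≤ s' * x / r' + T :=
  calc s * y / r + m * s = s * (x + S) / r := by
        rw [← hshift, mul_add, ← mul_assoc, mul_comm s m, Nat.add_mul_div_right _ _ hr]
    _ ≤ (s * x + T * r) / r := Nat.div_le_div_right (by rw [mul_add]; linarith)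
    _ = s * x / r + T := Nat.add_mul_div_right _ _ hr
    _ ≤ s' * x / r' + T :=
        Nat.add_le_add_right (Nat.mul_div_le_mul_div_of_mul_le hr hr' hslope x) T

theorem Nat.Coprime.mul_div_add_mul_lt {r s y m T : ℕ} (hcop : r.Coprime s) (hy : 0 < y)
    (hyr : y < r) (hT : s * (y + m * r) ≤ r * T) : s * y / r + m * s < T := by
  refine Nat.lt_of_mul_lt_mul_left (a := r) ?_
  calc r * (s * y / r + m * s) = r * (s * y / r) + s * (m * r) := by ring
    _ < s * y + s * (m * r) := by have := hcop.mul_div_lt hy hyr; omega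
    _ = s * (y + m * r) := by ring
    _ ≤ r * T := hT

/-- The paper's threshold `𝔡` at position `i'` of a block with parameters `(r, s)`, before the
shift by `-∑ ν < λ, s ν`. -/
def threshold (r s i' : ℕ) : ℤ := -((s * (i' - 1) / r : ℕ) : ℤ) + if i' = 1 then 1 else 0

theorem threshold_add_mul_le {r s r' s' i' j' m S T : ℕ} (hr : 0 < r) (hr' : 0 < r')
    (hcop : r.Coprime s) (hi' : i' ∈ Icc 1 r) (hj' : 1 ≤ j') (hslope : r' * s ≤ r * s')
    (hST : s * S ≤ r * T) (hshift : j' + S = i' + m * r) :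
    threshold r' s' j' + m * s ≤ threshold r s i' + T := by
  obtain ⟨hi'1, hi'r⟩ := mem_Icc.mp hi'
  unfold threshold
  by_cases hj'1 : j' = 1
  · subst hj'1
    by_cases hi'1' : i' = 1
    · subst hi'1'
      obtain rfl : S = m * r := by omega
      have : m * s ≤ T :=
        Nat.le_of_mul_le_mul_left ((by ring : r * (m * s) = s * (m * r)).trans_le hST) hr
      simp only [Nat.sub_self, mul_zero, Nat.zero_div, if_true]
      omega
    · have := hcop.mul_div_add_mul_lt (y := i' - 1) (m := m) (by omega) (by omega)
        (by rwa [show i' - 1 + m * r = S by omega])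
      simp only [Nat.sub_self, mul_zero, Nat.zero_div, if_true, if_neg hi'1']
      omega
  · have := Nat.mul_div_add_mul_le hr hr' hslope hST (x := j' - 1) (y := i' - 1) (m := m)
      (by omega)
    rw [if_neg hj'1]
    split_ifs <;> omega

theorem index_set_shift_general (d : ℕ) (r s : ℕ → ℕ)
    (hpos : ∀ μ ∈ Finset.Icc 1 d, 0 < r μ ∧ 0 < s μ)
    (hord : ∀ μ ν, 1 ≤ μ → μ ≤ ν → ν ≤ d → r ν * s μ ≤ r μ * s ν)
    (hcop : ∀ μ ∈ Finset.Icc 1 d, Nat.Coprime (r μ) (s μ))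
    (μ : ℕ) (hμ : μ ∈ Finset.Icc 1 d) (i' : ℕ) (hi' : i' ∈ Finset.Icc 1 (r μ))
    (k' k : ℤ)
    (hk' : -((s μ * (i' - 1) / r μ : ℕ) : ℤ) + (if i' = 1 then 1 else 0) ≤ k')
    (hk : k = k' - ∑ ν ∈ Finset.Icc 1 (μ - 1), (s ν : ℤ))
    (i : ℕ) (hi : i = i' + ∑ ν ∈ Finset.Icc 1 (μ - 1), r ν)
    (m : ℕ) (j : ℕ) (hj : j = i + m * r μ)
    (l : ℤ) (hl : l = k - (m : ℤ) * (s μ : ℤ))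
    (lam : ℕ) (hlam : lam ∈ Finset.Icc 1 d)
    (j' : ℕ) (hj' : j' ∈ Finset.Icc 1 (r lam))
    (hdecomp : j = j' + ∑ ν ∈ Finset.Icc 1 (lam - 1), r ν) :
    -((s lam * (j' - 1) / r lam : ℕ) : ℤ) - (∑ ν ∈ Finset.Icc 1 (lam - 1), (s ν : ℤ)) +
        (if j' = 1 then 1 else 0) ≤ l := by
  obtain ⟨hμ1, -⟩ := mem_Icc.mp hμ
  obtain ⟨hlam1, hlamd⟩ := mem_Icc.mp hlam
  obtain ⟨hj'1, hj'r⟩ := mem_Icc.mp hj'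
  simp only [Nat.Icc_one_sub_one_eq_Ico] at hk hi hdecomp ⊢
  have hμlam : μ ≤ lam := le_of_add_sum_Ico_le hlam1 (mem_Icc.mp hi').1 hj'r (by omega)
  have hST : s μ * ∑ ν ∈ Ico μ lam, r ν ≤ r μ * ∑ ν ∈ Ico μ lam, s ν := by
    rw [mul_sum, mul_sum]
    refine sum_le_sum fun ν hν => ?_
    obtain ⟨hμν, hνlam⟩ := mem_Ico.mp hν
    exact (mul_comm _ _).trans_le (hord μ ν hμ1 hμν (by omega))
  have hshift := sum_Ico_consecutive r hμ1 hμlam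
  have hmain := threshold_add_mul_le (hpos μ hμ).1 (hpos lam hlam).1 (hcop μ hμ) hi' hj'1
    (hord μ lam hμ1 hμlam hlamd) hST (m := m) (by omega)
  simp only [threshold, Nat.cast_sum] at hmain
  rw [← sum_Ico_consecutive _ hμ1 hμlam, hl, hk]
  linarith

/-- the forward (`m ≥ 0`) direction of the index-set rewriting lemma:
if `(i,k)` lies above the threshold via the index-`μ` representation, then so does
`(j,l) = (i + m r_μ, k - m s_μ)` via its own decomposition. -/
theorem index_set_shift (d : ℕ) (hd : 2 ≤ d) (r s : ℕ → ℕ)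
    (hpos : ∀ μ ∈ Finset.Icc 1 d, 0 < r μ ∧ 0 < s μ)
    (hord : ∀ μ ν, 1 ≤ μ → μ ≤ ν → ν ≤ d → r ν * s μ ≤ r μ * s ν)
    (hcop : ∀ μ ∈ Finset.Icc 1 d, Nat.Coprime (r μ) (s μ))
    (μ : ℕ) (hμ : μ ∈ Finset.Icc 1 d) (i' : ℕ) (hi' : i' ∈ Finset.Icc 1 (r μ))
    (k' k : ℤ)
    (hk' : -((s μ * (i' - 1) / r μ : ℕ) : ℤ) + (if i' = 1 then 1 else 0) ≤ k')
    (hk : k = k' - ∑ ν ∈ Finset.Icc 1 (μ - 1), (s ν : ℤ))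
    (i : ℕ) (hi : i = i' + ∑ ν ∈ Finset.Icc 1 (μ - 1), r ν)
    (m : ℕ) (j : ℕ) (hj : j = i + m * r μ)
    (hjle : j ≤ ∑ ν ∈ Finset.Icc 1 d, r ν)
    (l : ℤ) (hl : l = k - (m : ℤ) * (s μ : ℤ))
    (lam : ℕ) (hlam : lam ∈ Finset.Icc 1 d)
    (j' : ℕ) (hj' : j' ∈ Finset.Icc 1 (r lam))
    (hdecomp : j = j' + ∑ ν ∈ Finset.Icc 1 (lam - 1), r ν) :
    -((s lam * (j' - 1) / r lam : ℕ) : ℤ) - (∑ ν ∈ Finset.Icc 1 (lam - 1), (s ν : ℤ)) +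
        (if j' = 1 then 1 else 0) ≤ l :=
  index_set_shift_general d r s hpos hord hcop μ hμ i' hi' k' k hk' hk i hi m j hj l hl lam hlam j'
    hj' hdecomp
end

section
/- Let d ≥ 1 and (r_μ, s_μ)_{μ=1}^d positive integers with r₁/s₁ ≥ ... ≥ r_d/s_d. Fix λ, μ ∈ {1,...,d} and i ∈ {1,...,Σ r_ν} with Σ_{ν<λ} r_ν < i ≤ Σ_{ν≤λ} r_ν, and write i′ = i − Σ_{ν<λ} r_ν. Define 𝔭_μ(i) = s_μ(1 − i + Σ_{ν<μ} r_ν) + r_μ(1 + ⌊s_λ(i′−1)/r_λ⌋ + Σ_{ν<λ} s_ν − Σ_{ν<μ} s_ν − [λ > 1]·[i′=1]). Then 𝔭_μ(i) ≥ 0. -/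
/-!
Write `i = ∑_{ν<λ} r_ν + i'` and `c = 1 + ⌊s_λ(i'-1)/r_λ⌋ - [λ>1][i'=1]`, so that
`s_λ (i'-1) ≤ r_λ c` (if `i' = 1` the left side vanishes and `c ≥ 0`, otherwise `⌊x⌋ > x - 1`). Then
`𝔭_μ(i) = s_μ(1 - i') + r_μ c + G(μ) - G(λ)` with `G(n) = ∑_{ν<n} (s_μ r_ν - r_μ s_ν)`.
The ordering makes the summands of `G` nonnegative for `ν ≤ μ` and nonpositive for `ν ≥ μ`, so
`G(λ) ≤ G(μ)` when `μ ≤ λ`, and `G(λ) + s_μ r_λ - r_μ s_λ ≤ G(μ)` when `λ < μ`. What remains is a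
comparison of the slopes `s_μ / r_μ` and `s_λ / r_λ` against `s_λ (i'-1) ≤ r_λ c`, using `i' ≤ r_λ`
in the second case.
-/

open Finset

section Slopes

variable {α : Type*} [CommRing α] [LinearOrder α] [IsStrictOrderedRing α]

theorem mul_le_mul_of_slope_le {r₁ s₁ r₂ s₂ a c : α} (hr₁ : 0 < r₁) (ha : 0 ≤ a) (hr₂ : 0 ≤ r₂)
    (hslope : r₁ * s₂ ≤ r₂ * s₁) (h : s₁ * a ≤ r₁ * c) : s₂ * a ≤ r₂ * c := by
  refine le_of_mul_le_mul_left ?_ hr₁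
  calc r₁ * (s₂ * a) = (r₁ * s₂) * a := by ring
    _ ≤ (r₂ * s₁) * a := mul_le_mul_of_nonneg_right hslope ha
    _ = r₂ * (s₁ * a) := by ring
    _ ≤ r₂ * (r₁ * c) := mul_le_mul_of_nonneg_left h hr₂
    _ = r₁ * (r₂ * c) := by ring

theorem mul_sub_le_mul_sub_of_slope_le {r₁ s₁ r₂ s₂ a c : α} (hr₁ : 0 < r₁) (ha : a ≤ r₁)
    (hr₂ : 0 ≤ r₂) (hslope : r₂ * s₁ ≤ r₁ * s₂) (h : s₁ * a ≤ r₁ * c) :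
    r₂ * (s₁ - c) ≤ s₂ * (r₁ - a) := by
  refine le_of_mul_le_mul_left ?_ hr₁
  calc r₁ * (r₂ * (s₁ - c)) = r₂ * (r₁ * s₁) - r₂ * (r₁ * c) := by ring
    _ ≤ r₂ * (r₁ * s₁) - r₂ * (s₁ * a) := by gcongr
    _ = (r₂ * s₁) * (r₁ - a) := by ring
    _ ≤ (r₁ * s₂) * (r₁ - a) := mul_le_mul_of_nonneg_right hslope (sub_nonneg.2 ha)
    _ = r₁ * (s₂ * (r₁ - a)) := by ring

/-- The ordering `r₁ / s₁ ≥ ⋯ ≥ r_d / s_d` with denominators cleared. -/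
def SlopeMonotone (r s : ℕ → α) (d : ℕ) : Prop :=
  ∀ μ ν, 1 ≤ μ → μ ≤ ν → ν ≤ d → r ν * s μ ≤ r μ * s ν

namespace SlopeMonotone

variable {r s : ℕ → α} {d μ m n : ℕ}

theorem sum_Ico_cross_nonneg (h : SlopeMonotone r s d) (hm : 1 ≤ m) (hn : n ≤ μ + 1)
    (hμ : μ ≤ d) : 0 ≤ ∑ ν ∈ Ico m n, (s μ * r ν - r μ * s ν) :=
  sum_nonneg fun ν hν => by
    rw [mem_Ico] at hν
    linarith [h ν μ (by omega) (by omega) hμ]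

theorem sum_Ico_cross_nonpos (h : SlopeMonotone r s d) (hμ : 1 ≤ μ) (hm : μ ≤ m)
    (hn : n ≤ d + 1) : ∑ ν ∈ Ico m n, (s μ * r ν - r μ * s ν) ≤ 0 :=
  sum_nonpos fun ν hν => by
    rw [mem_Ico] at hν
    linarith [h μ ν hμ (by omega) (by omega)]

theorem prefix_cross_le_of_le (h : SlopeMonotone r s d) (hμ : 1 ≤ μ) (hle : μ ≤ n)
    (hn : n ≤ d + 1) :
    s μ * ∑ ν ∈ Ico 1 n, r ν - r μ * ∑ ν ∈ Ico 1 n, s ν ≤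
      s μ * ∑ ν ∈ Ico 1 μ, r ν - r μ * ∑ ν ∈ Ico 1 μ, s ν := by
  simp only [mul_sum, ← sum_sub_distrib]
  rw [← sum_Ico_consecutive _ hμ hle]
  linarith [h.sum_Ico_cross_nonpos hμ le_rfl hn]

theorem prefix_cross_add_le_of_lt (h : SlopeMonotone r s d) (hn : 1 ≤ n) (hlt : n < μ)
    (hμ : μ ≤ d) :
    s μ * ∑ ν ∈ Ico 1 n, r ν - r μ * ∑ ν ∈ Ico 1 n, s ν + (s μ * r n - r μ * s n) ≤
      s μ * ∑ ν ∈ Ico 1 μ, r ν - r μ * ∑ ν ∈ Ico 1 μ, s ν := by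
  simp only [mul_sum, ← sum_sub_distrib]
  rw [← sum_Ico_consecutive _ hn hlt.le, sum_eq_sum_Ico_succ_bot hlt]
  linarith [h.sum_Ico_cross_nonneg (m := n + 1) (by omega) (Nat.le_succ μ) hμ]

end SlopeMonotone

end Slopes

theorem mul_sub_one_le_mul_div_add_one_sub_ite {r : ℕ} (s : ℕ) {j : ℕ} {p : Prop} [Decidable p]
    (hr : 0 < r) (hj : 1 ≤ j) (hp : p → j = 1) :
    (s : ℤ) * (j - 1) ≤ r * (1 + ((s * (j - 1) / r : ℕ) : ℤ) - if p then 1 else 0) := by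
  split_ifs with h
  · obtain rfl := hp h
    simp
  · have hdiv := Nat.lt_mul_div_succ (s * (j - 1)) hr
    generalize s * (j - 1) / r = q at hdiv ⊢
    have : ((s * (j - 1) : ℕ) : ℤ) < r * (q + 1) := by exact_mod_cast hdiv
    push_cast [Nat.cast_sub hj] at this
    linarith

theorem p_mu_nonneg_general (d : ℕ) (r s : ℕ → ℕ)
    (hpos : ∀ μ ∈ Finset.Icc 1 d, 0 < r μ ∧ 0 < s μ)
    (hord : ∀ μ ν, 1 ≤ μ → μ ≤ ν → ν ≤ d → r ν * s μ ≤ r μ * s ν)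
    (lam μ : ℕ) (hlam : lam ∈ Finset.Icc 1 d) (hμ : μ ∈ Finset.Icc 1 d)
    (i i' : ℕ)
    (hi1 : ∑ ν ∈ Finset.Icc 1 (lam - 1), r ν < i)
    (hi2 : i ≤ ∑ ν ∈ Finset.Icc 1 lam, r ν)
    (hi' : i' = i - ∑ ν ∈ Finset.Icc 1 (lam - 1), r ν) :
    0 ≤ (s μ : ℤ) * (1 - (i : ℤ) + ∑ ν ∈ Finset.Icc 1 (μ - 1), (r ν : ℤ)) +
        (r μ : ℤ) * (1 + ((s lam * (i' - 1) / r lam : ℕ) : ℤ) +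
          (∑ ν ∈ Finset.Icc 1 (lam - 1), (s ν : ℤ)) -
          (∑ ν ∈ Finset.Icc 1 (μ - 1), (s ν : ℤ)) -
          (if 1 < lam ∧ i' = 1 then 1 else 0)) := by
  rw [mem_Icc] at hlam hμ
  have hr : 0 < r lam := (hpos lam (mem_Icc.2 hlam)).1
  have hslope : SlopeMonotone (fun ν => (r ν : ℤ)) (fun ν => (s ν : ℤ)) d :=
    fun μ ν h₁ h₂ h₃ => by dsimp only; exact_mod_cast hord μ ν h₁ h₂ h₃
  rw [← Ico_add_one_right_eq_Icc, sum_Ico_succ_top hlam.1] at hi2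
  simp only [Icc_sub_one_right_eq_Ico_of_not_isMin (not_isMin_of_lt (show 0 < lam from hlam.1)),
    Icc_sub_one_right_eq_Ico_of_not_isMin (not_isMin_of_lt (show 0 < μ from hμ.1))] at hi1 hi' ⊢
  have hi'1 : 1 ≤ i' := by omega
  have hi'r : (i' : ℤ) ≤ r lam := by exact_mod_cast (by omega : i' ≤ r lam)
  have hi : (i : ℤ) = ∑ ν ∈ Ico 1 lam, (r ν : ℤ) + i' := by
    exact_mod_cast (by omega : i = ∑ ν ∈ Ico 1 lam, r ν + i')
  have hfloor := mul_sub_one_le_mul_div_add_one_sub_ite (s lam) hr hi'1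
    (p := 1 < lam ∧ i' = 1) And.right
  rw [hi]
  rcases le_or_gt μ lam with hle | hlt
  · have hloc := mul_le_mul_of_slope_le (by exact_mod_cast hr) (by linarith) (Nat.cast_nonneg _)
      (by exact_mod_cast hord μ lam hμ.1 hle hlam.2 : (r lam : ℤ) * s μ ≤ r μ * s lam) hfloor
    linarith [hslope.prefix_cross_le_of_le hμ.1 hle (by omega)]
  · have hloc := mul_sub_le_mul_sub_of_slope_le (by exact_mod_cast hr) (by linarith)
      (Nat.cast_nonneg _) (by exact_mod_cast hord lam μ hlam.1 hlt.le hμ.2 :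
        (r μ : ℤ) * s lam ≤ r lam * s μ) hfloor
    linarith [hslope.prefix_cross_add_le_of_lt hlam.1 hlt hμ.2]

/-- nonnegativity of
`𝔭_μ(i) = s_μ(1 - i + ∑_{ν<μ} r_ν) + r_μ(1 + ⌊s_λ(i'-1)/r_λ⌋ + ∑_{ν<λ} s_ν - ∑_{ν<μ} s_ν
  - [λ>1][i'=1])`. -/
theorem p_mu_nonneg (d : ℕ) (hd : 1 ≤ d) (r s : ℕ → ℕ)
    (hpos : ∀ μ ∈ Finset.Icc 1 d, 0 < r μ ∧ 0 < s μ)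
    (hord : ∀ μ ν, 1 ≤ μ → μ ≤ ν → ν ≤ d → r ν * s μ ≤ r μ * s ν)
    (lam μ : ℕ) (hlam : lam ∈ Finset.Icc 1 d) (hμ : μ ∈ Finset.Icc 1 d)
    (i i' : ℕ)
    (hi1 : ∑ ν ∈ Finset.Icc 1 (lam - 1), r ν < i)
    (hi2 : i ≤ ∑ ν ∈ Finset.Icc 1 lam, r ν)
    (hi' : i' = i - ∑ ν ∈ Finset.Icc 1 (lam - 1), r ν) :
    0 ≤ (s μ : ℤ) * (1 - (i : ℤ) + ∑ ν ∈ Finset.Icc 1 (μ - 1), (r ν : ℤ)) +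
        (r μ : ℤ) * (1 + ((s lam * (i' - 1) / r lam : ℕ) : ℤ) +
          (∑ ν ∈ Finset.Icc 1 (lam - 1), (s ν : ℤ)) -
          (∑ ν ∈ Finset.Icc 1 (μ - 1), (s ν : ℤ)) -
          (if 1 < lam ∧ i' = 1 then 1 else 0)) :=
  p_mu_nonneg_general d r s hpos hord lam μ hlam hμ i i' hi1 hi2 hi'
end

section
/- Suppose r > 1 and s > r + 1, and assume gcd(r,s)=1. Define ℓ(k) ∈ {0,...,r−1} by r ∣ sℓ(k) + k. Then the symmetry condition 'k₂k₃(ℓ(k₂)+ℓ(k₃)−r+1) = k₁k₃(ℓ(k₁)+ℓ(k₃)−r+1) for all positive k₁,k₂,k₃ with k₁+k₂+k₃ = s' fails. -/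
open Finset

/-- if `r > 1` and `s > r + 1` (with `gcd(r,s) = 1`), the symmetry condition
`k₂k₃(ℓ(k₂)+ℓ(k₃)-r+1) = k₁k₃(ℓ(k₁)+ℓ(k₃)-r+1)` for all positive `k₁+k₂+k₃ = s` fails. -/
theorem symmetry_fails_large_s (r s : ℕ) (hr : 1 < r) (hs : r + 1 < s)
    (hcop : Nat.Coprime r s)
    (ℓ : ℕ → ℕ) (hℓ : ∀ k, ℓ k < r ∧ r ∣ s * ℓ k + k) :
    ¬ ∀ k₁ k₂ k₃ : ℕ, 0 < k₁ → 0 < k₂ → 0 < k₃ → k₁ + k₂ + k₃ = s →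
        (k₂ : ℤ) * k₃ * ((ℓ k₂ : ℤ) + (ℓ k₃ : ℤ) - r + 1) =
          (k₁ : ℤ) * k₃ * ((ℓ k₁ : ℤ) + (ℓ k₃ : ℤ) - r + 1) := by
  intro h
  obtain ⟨hlr, hdr⟩ := hℓ r
  have hdvd : r ∣ s * ℓ r := by
    have := Nat.dvd_sub hdr (dvd_refl r)
    simpa using this
  have hlr0 : ℓ r = 0 := by
    have : r ∣ ℓ r := hcop.dvd_of_dvd_mul_left hdvd
    rcases Nat.eq_zero_or_pos (ℓ r) with h0 | hpos
    · exact h0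
    · exact absurd (Nat.le_of_dvd hpos this) (by omega)
  obtain ⟨hl1, hd1⟩ := hℓ 1
  have hl1pos : 0 < ℓ 1 := by
    rcases Nat.eq_zero_or_pos (ℓ 1) with h0 | hpos
    · rw [h0] at hd1
      simp at hd1
      omega
    · exact hpos
  obtain ⟨hl3, _⟩ := hℓ (s - r - 1)
  have heq := h 1 r (s - r - 1) (by omega) (by omega) (by omega) (by omega)
  rw [hlr0] at heq
  have hk3 : (0:ℤ) < ((s - r - 1 : ℕ) : ℤ) := by exact_mod_cast Nat.pos_of_ne_zero (by omega)
  have hl3' : (ℓ (s - r - 1) : ℤ) ≤ (r : ℤ) - 1 := by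
    have : (ℓ (s - r - 1) : ℤ) < r := by exact_mod_cast hl3
    linarith
  have hl1' : (1:ℤ) ≤ (ℓ 1 : ℤ) := by exact_mod_cast hl1pos
  have hr' : (2:ℤ) ≤ (r:ℤ) := by exact_mod_cast hr
  push_cast at heq
  have h1 : ((r:ℤ) - 1) * ((ℓ (s - r - 1) : ℤ) - r + 1) ≤ 0 :=
    mul_nonpos_of_nonneg_of_nonpos (by linarith) (by linarith)
  nlinarith [mul_le_mul_of_nonneg_left h1 hk3.le, mul_le_mul_of_nonneg_left hl1' hk3.le]
end
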